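/- arXiv:2003.06980 — 8 statements merged into one kernel-verified Lean document; each statement's English description precedes it below -/
import Mathlib

section
/- Let I and J be squarefree monomial ideals in a polynomial ring K[x_1,...,x_n], and let g_1, ..., g_r ∈ I and h ∈ J be squarefree monomials. Then lcm(g_1 g_2 ⋯ g_r, h^r) = ∏_{i=1}^r lcm(g_i, h). Consequently, I^r ∩ J^{[r]} ⊆ (I ∩ J)^r, where J^{[r]} denotes the ideal generated by the r-th powers of the monomial generators of J. -/
/-!
Coordinatewise, with `hⱼ ∈ {0, 1}`: if `hⱼ = 0` both sides are `∑ gᵢⱼ`, and if `hⱼ = 1` both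
sides are `r`, because `∑ gᵢⱼ ≤ r` when every `gᵢⱼ ≤ 1`. For the ideals, a term `m` of
`p ∈ I^r ∩ J^{[r]}` is divisible by some `g₁ ⋯ g_r` and by some `h^r`, hence by their lcm
`∏ lcm(gᵢ, h)`, and each factor `lcm(gᵢ, h)` lies in `I ∩ J`.
-/

open Finset MvPolynomial
open scoped Pointwise

theorem Finsupp.sum_sup_card_nsmul_of_le_one {σ ι : Type*} (s : Finset ι) (g : ι → σ →₀ ℕ)
    (h : σ →₀ ℕ) (hg : ∀ i ∈ s, ∀ j, g i j ≤ 1) (hh : ∀ j, h j ≤ 1) :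
    (∑ i ∈ s, g i) ⊔ (#s • h) = ∑ i ∈ s, (g i ⊔ h) := by
  ext j
  simp only [Finsupp.sup_apply, Finsupp.finsetSum_apply, Finsupp.smul_apply, smul_eq_mul]
  rcases Nat.le_one_iff_eq_zero_or_eq_one.mp (hh j) with h0 | h1
  · simp [h0]
  · have hsup : ∀ i ∈ s, g i j ⊔ 1 = 1 := fun i hi => sup_eq_right.mpr (hg i hi j)
    rw [h1, Finset.sum_congr rfl hsup, sum_const, smul_eq_mul, mul_one]
    simpa using sum_le_card_nsmul s (g · j) 1 fun i hi => hg i hi j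

namespace MvPolynomial

variable {σ R : Type*} [CommSemiring R]

theorem mem_ideal_of_forall_mem_support {I : Ideal (MvPolynomial σ R)} {p : MvPolynomial σ R}
    (hp : ∀ m ∈ p.support, ∃ d ≤ m, monomial d 1 ∈ I) : p ∈ I := by
  have hspan : p ∈ Ideal.span ((monomial · (1 : R)) '' {d | monomial d 1 ∈ I}) :=
    mem_ideal_span_monomial_image.mpr fun m hm => by simpa [and_comm] using hp m hm
  exact Ideal.span_le.mpr (by rintro _ ⟨d, hd, rfl⟩; exact hd) hspan

theorem monomial_mem_span_monomial_image_of_le {S : Set (σ →₀ ℕ)} {d e : σ →₀ ℕ}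
    (hd : d ∈ S) (hle : d ≤ e) : monomial e (1 : R) ∈ Ideal.span ((monomial · (1 : R)) '' S) :=
  Ideal.mem_of_dvd _ (monomial_dvd_monomial.mpr ⟨Or.inr hle, one_dvd _⟩)
    (Ideal.subset_span ⟨d, hd, rfl⟩)

theorem monomial_sum_mem_pow {ι : Type*} (s : Finset ι) {I : Ideal (MvPolynomial σ R)}
    {f : ι → σ →₀ ℕ} (hf : ∀ i ∈ s, monomial (f i) 1 ∈ I) :
    monomial (∑ i ∈ s, f i) (1 : R) ∈ I ^ #s := by
  rw [monomial_sum_one, ← prod_const]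
  exact Ideal.prod_mem_prod hf

theorem exists_sum_le_of_mem_span_monomial_pow {S : Set (σ →₀ ℕ)} {r : ℕ}
    {p : MvPolynomial σ R} (hp : p ∈ Ideal.span ((monomial · (1 : R)) '' S) ^ r) :
    ∀ m ∈ p.support, ∃ g : Fin r → σ →₀ ℕ, (∀ i, g i ∈ S) ∧ ∑ i, g i ≤ m := by
  have hgen : ((monomial · (1 : R)) '' S) ^ r ⊆
      (monomial · 1) '' {d | ∃ g : Fin r → σ →₀ ℕ, (∀ i, g i ∈ S) ∧ ∑ i, g i = d} := by
    intro x hx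
    obtain ⟨f, rfl⟩ := Set.mem_pow.mp hx
    choose g hg hfg using fun i => (f i).2
    refine ⟨∑ i, g i, ⟨g, hg, rfl⟩, ?_⟩
    simp only [monomial_sum_one, List.prod_ofFn, hfg]
  rw [Ideal.span, Submodule.span_pow] at hp
  intro m hm
  obtain ⟨_, ⟨g, hg, rfl⟩, hgm⟩ :=
    mem_ideal_span_monomial_image.mp (Submodule.span_mono hgen hp) m hm
  exact ⟨g, hg, hgm⟩

end MvPolynomial

theorem stmt3_general {K : Type*} [Field K] {n : ℕ} (r : ℕ)
    (SI SJ : Set (Fin n →₀ ℕ))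
    (hSI : ∀ a ∈ SI, ∀ i, a i ≤ 1) (hSJ : ∀ b ∈ SJ, ∀ i, b i ≤ 1) :
    (∀ (g : Fin r → (Fin n →₀ ℕ)) (h : Fin n →₀ ℕ),
      (∀ i j, g i j ≤ 1) → (∀ j, h j ≤ 1) →
      (∑ i, g i) ⊔ (r • h) = ∑ i, (g i ⊔ h)) ∧
    Ideal.span ((fun d => MvPolynomial.monomial d (1 : K)) '' SI) ^ r ⊓
        Ideal.span ((fun d => MvPolynomial.monomial (r • d) (1 : K)) '' SJ) ≤
      (Ideal.span ((fun d => MvPolynomial.monomial d (1 : K)) '' SI) ⊓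
        Ideal.span ((fun d => MvPolynomial.monomial d (1 : K)) '' SJ)) ^ r := by
  have lcm_eq (g : Fin r → Fin n →₀ ℕ) (h : Fin n →₀ ℕ) (hg : ∀ i j, g i j ≤ 1)
      (hh : ∀ j, h j ≤ 1) : (∑ i, g i) ⊔ (r • h) = ∑ i, (g i ⊔ h) := by
    simpa using Finsupp.sum_sup_card_nsmul_of_le_one univ g h (fun i _ => hg i) hh
  refine ⟨lcm_eq, fun p hp => mem_ideal_of_forall_mem_support fun m hm => ?_⟩
  obtain ⟨hpI, hpJ⟩ := Submodule.mem_inf.mp hp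
  obtain ⟨g, hg, hgm⟩ := exists_sum_le_of_mem_span_monomial_pow hpI m hm
  rw [← Set.image_image (monomial · (1 : K)) (r • ·), mem_ideal_span_monomial_image] at hpJ
  obtain ⟨_, ⟨h, hh, rfl⟩, hhm⟩ := hpJ m hm
  refine ⟨∑ i, (g i ⊔ h), ?_, ?_⟩
  · rw [← lcm_eq g h (fun i => hSI _ (hg i)) (hSJ h hh)]
    exact sup_le hgm hhm
  · have hmem := monomial_sum_mem_pow univ (R := K) (f := fun i => g i ⊔ h) fun i _ =>
      Ideal.mem_inf.mpr ⟨monomial_mem_span_monomial_image_of_le (hg i) le_sup_left,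
        monomial_mem_span_monomial_image_of_le hh le_sup_right⟩
    rwa [card_univ, Fintype.card_fin] at hmem

/-- For squarefree monomials `g₁,…,g_r ∈ I` and `h ∈ J` (recorded by exponent vectors),
`lcm(g₁⋯g_r, h^r) = ∏ lcm(gᵢ, h)`; consequently `I^r ∩ J^{[r]} ⊆ (I ∩ J)^r` for
squarefree monomial ideals `I` and `J`. -/
theorem stmt3 {K : Type*} [Field K] {n : ℕ} (r : ℕ) (hr : 0 < r)
    (SI SJ : Set (Fin n →₀ ℕ))
    (hSI : ∀ a ∈ SI, ∀ i, a i ≤ 1) (hSJ : ∀ b ∈ SJ, ∀ i, b i ≤ 1) :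
    (∀ (g : Fin r → (Fin n →₀ ℕ)) (h : Fin n →₀ ℕ),
      (∀ i j, g i j ≤ 1) → (∀ j, h j ≤ 1) →
      (∑ i, g i) ⊔ (r • h) = ∑ i, (g i ⊔ h)) ∧
    Ideal.span ((fun d => MvPolynomial.monomial d (1 : K)) '' SI) ^ r ⊓
        Ideal.span ((fun d => MvPolynomial.monomial (r • d) (1 : K)) '' SJ) ≤
      (Ideal.span ((fun d => MvPolynomial.monomial d (1 : K)) '' SI) ⊓
        Ideal.span ((fun d => MvPolynomial.monomial d (1 : K)) '' SJ)) ^ r :=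
  stmt3_general r SI SJ hSI hSJ
end

section
/- Let I be a squarefree monomial ideal of codimension (height) at least 2 in K[x_1,...,x_n], let π(I) denote the least common multiple of the minimal monomial generators of I, and let d = deg π(I). Then π(I)^{r-1} ∈ I^r for all r ≥ d. -/
/-!
For every variable `i` of `π = lcm(S)` pick a generator `gᵢ ∈ S` avoiding `xᵢ` (this is the
codimension hypothesis), and pad these at most `#supp π ≤ deg π ≤ r` generators with copies of
an arbitrary one to obtain `r` generators. All of them divide `π`, and in each variable `xᵢ` at
least one of them has exponent `0`, so their product divides `π ^ (r - 1)`.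
-/

open MvPolynomial Finsupp

theorem Ideal.multiset_prod_mem_pow {R : Type*} [CommSemiring R] {I : Ideal R} {M : Multiset R}
    (h : ∀ x ∈ M, x ∈ I) : M.prod ∈ I ^ Multiset.card M := by
  induction M using Multiset.induction with
  | empty => simp
  | cons a M ih =>
    rw [Multiset.prod_cons, Multiset.card_cons, pow_succ']
    exact Ideal.mul_mem_mul (h a (Multiset.mem_cons_self a M))
      (ih fun x hx => h x (Multiset.mem_cons_of_mem hx))

section

variable {σ : Type*}

theorem MvPolynomial.monomial_multiset_sum_one {R : Type*} [CommSemiring R]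
    (M : Multiset (σ →₀ ℕ)) :
    monomial M.sum (1 : R) = (M.map fun a => monomial a (1 : R)).prod := by
  induction M using Multiset.induction with
  | empty => simp
  | cons a M ih => rw [Multiset.sum_cons, Multiset.map_cons, Multiset.prod_cons, ← ih,
      monomial_mul, one_mul]

theorem MvPolynomial.monomial_mem_span_monomial_pow {R : Type*} [CommSemiring R]
    {S : Set (σ →₀ ℕ)} {M : Multiset (σ →₀ ℕ)} (hMS : ∀ a ∈ M, a ∈ S) {e : σ →₀ ℕ}
    (he : M.sum ≤ e) :
    monomial e (1 : R) ∈ Ideal.span ((fun a => monomial a (1 : R)) '' S) ^ Multiset.card M := by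
  have hsplit : monomial e (1 : R)
      = monomial (e - M.sum) 1 * (M.map fun a => monomial a (1 : R)).prod := by
    rw [← monomial_multiset_sum_one, monomial_mul, one_mul, tsub_add_cancel_of_le he]
  rw [hsplit]
  refine Ideal.mul_mem_left _ _ ?_
  rw [← Multiset.card_map fun a => monomial a (1 : R)]
  refine Ideal.multiset_prod_mem_pow fun x hx => ?_
  obtain ⟨a, ha, rfl⟩ := Multiset.mem_map.mp hx
  exact Ideal.subset_span ⟨a, hMS a ha, rfl⟩

theorem Multiset.sum_le_card_pred_nsmul {M : Multiset (σ →₀ ℕ)} {π : σ →₀ ℕ}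
    (hle : ∀ a ∈ M, a ≤ π) (hzero : ∀ i ∈ π.support, ∃ a ∈ M, a i = 0) :
    M.sum ≤ (Multiset.card M - 1) • π := by
  intro i
  by_cases hi : i ∈ π.support
  · obtain ⟨a, ha, hai⟩ := hzero i hi
    obtain ⟨M', rfl⟩ := Multiset.exists_cons_of_mem ha
    have hM' : M'.sum ≤ Multiset.card M' • π :=
      Multiset.sum_le_card_nsmul _ _ fun b hb => hle b (Multiset.mem_cons_of_mem hb)
    simpa [hai] using hM' i
  · have hM : M.sum ≤ Multiset.card M • π := Multiset.sum_le_card_nsmul _ _ hle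
    simpa [notMem_support_iff.mp hi] using hM i

theorem Finsupp.card_support_le_sum (f : σ →₀ ℕ) : f.support.card ≤ f.sum fun _ e => e := by
  rw [Finset.card_eq_sum_ones, Finsupp.sum]
  exact Finset.sum_le_sum fun i hi => Nat.one_le_iff_ne_zero.mpr (mem_support_iff.mp hi)

end

theorem Finset.exists_subset_card_le_forall_exists {ι α : Type*} [DecidableEq α]
    {s : Finset ι} {S : Finset α} {p : ι → α → Prop} (h : ∀ i ∈ s, ∃ a ∈ S, p i a) :
    ∃ T ⊆ S, T.card ≤ s.card ∧ ∀ i ∈ s, ∃ a ∈ T, p i a := by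
  choose g hgS hg using h
  refine ⟨s.attach.image fun i => g i.1 i.2, fun a ha => ?_, Finset.card_image_le.trans_eq
    s.card_attach, fun i hi => ⟨g i hi, Finset.mem_image_of_mem _ (s.mem_attach ⟨i, hi⟩),
    hg i hi⟩⟩
  obtain ⟨i, -, rfl⟩ := Finset.mem_image.mp ha
  exact hgS i.1 i.2

theorem stmt4_general {K : Type*} [Field K] {n : ℕ}
    (S : Finset (Fin n →₀ ℕ)) (hne : S.Nonempty)
    (π : Fin n →₀ ℕ) (hπ : π = S.sup id)
    (hcodim : ∀ i : Fin n, π i ≠ 0 → ∃ a ∈ S, a i = 0)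
    (d : ℕ) (hd : d = π.sum fun _ e => e)
    (r : ℕ) (hr : d ≤ r) :
    MvPolynomial.monomial ((r - 1) • π) (1 : K) ∈
      (Ideal.span ((fun e => MvPolynomial.monomial e (1 : K)) '' (S : Set (Fin n →₀ ℕ)))) ^ r := by
  classical
  obtain ⟨a₀, ha₀⟩ := hne
  obtain ⟨T, hTS, hTcard, hT⟩ := Finset.exists_subset_card_le_forall_exists
    (s := π.support) fun i hi => hcodim i (mem_support_iff.mp hi)
  have hTr : T.card ≤ r := hTcard.trans ((card_support_le_sum π).trans (hd ▸ hr))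
  set M := T.val + Multiset.replicate (r - T.card) a₀
  have hcard : Multiset.card M = r := by simp [M]; omega
  have hMS : ∀ a ∈ M, a ∈ S := by
    simp only [M, Multiset.mem_add, Finset.mem_val, Multiset.mem_replicate]
    rintro a (ha | ⟨-, rfl⟩)
    exacts [hTS ha, ha₀]
  have hle : ∀ a ∈ M, a ≤ π := fun a ha => hπ ▸ Finset.le_sup (f := id) (hMS a ha)
  have hzero : ∀ i ∈ π.support, ∃ a ∈ M, a i = 0 := fun i hi =>
    let ⟨a, ha, hai⟩ := hT i hi
    ⟨a, Multiset.mem_add.mpr (Or.inl ha), hai⟩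
  rw [← hcard]
  exact monomial_mem_span_monomial_pow hMS (hcard ▸ Multiset.sum_le_card_pred_nsmul hle hzero)

/-- If `I` is a squarefree monomial ideal of codimension at least `2`, `π(I)` the lcm of
its minimal generators and `d = deg π(I)`, then `π(I)^{r-1} ∈ I^r` for all `r ≥ d`. -/
theorem stmt4 {K : Type*} [Field K] {n : ℕ}
    (S : Finset (Fin n →₀ ℕ)) (hne : S.Nonempty)
    (hsf : ∀ a ∈ S, ∀ i, a i ≤ 1)
    (π : Fin n →₀ ℕ) (hπ : π = S.sup id)
    (hcodim : ∀ i : Fin n, π i ≠ 0 → ∃ a ∈ S, a i = 0)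
    (d : ℕ) (hd : d = π.sum fun _ e => e)
    (r : ℕ) (hr : d ≤ r) :
    MvPolynomial.monomial ((r - 1) • π) (1 : K) ∈
      (Ideal.span ((fun e => MvPolynomial.monomial e (1 : K)) '' (S : Set (Fin n →₀ ℕ)))) ^ r :=
  stmt4_general S hne π hπ hcodim d hd r hr
end

section
/- Let Q be a monomial prime ideal of K[x_1,...,x_n] generated by at most h variables, let r ≥ 2 be an integer, and let π(Q) denote the product of the variables generating Q. Then Q^{rh - h} ⊆ Q^{[r]} + (π(Q)^{r-1}), where Q^{[r]} is the ideal generated by the r-th powers of the variables generating Q. -/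
/-!
`Q ^ (r * h - h)` is generated by the monomials `x ^ f` of degree `(r - 1) * h` in the
variables of `Q`, so it suffices to place each of them in the right-hand side.
Since `Q` has at most `h` variables, either some exponent of `f` exceeds `r - 1`, so that
`x ^ f ∈ Q^{[r]}`, or every exponent equals `r - 1` and `x ^ f = π(Q) ^ (r - 1)`.
-/

open MvPolynomial

theorem Finset.exists_lt_or_forall_eq_of_card_mul_le_sum {ι : Type*} (T : Finset ι) (f : ι → ℕ)
    {c : ℕ} (hsum : T.card * c ≤ ∑ i ∈ T, f i) : (∃ i ∈ T, c < f i) ∨ ∀ i ∈ T, f i = c := by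
  refine or_iff_not_imp_left.mpr fun hnlt => ?_
  have hle : ∀ i ∈ T, f i ≤ c := fun i hi => not_lt.mp fun hc => hnlt ⟨i, hi, hc⟩
  have hconst : ∑ i ∈ T, f i = ∑ _i ∈ T, c := by
    refine le_antisymm (Finset.sum_le_sum hle) ?_
    rwa [Finset.sum_const, smul_eq_mul]
  exact (Finset.sum_eq_sum_iff_of_le hle).mp hconst

theorem Finsupp.degree_eq_sum_of_support_subset {σ : Type*} {f : σ →₀ ℕ} {T : Finset σ}
    (hf : f.support ⊆ T) : f.degree = ∑ i ∈ T, f i :=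
  Finset.sum_subset hf fun _ _ hi => Finsupp.notMem_support_iff.mp hi

namespace MvPolynomial

variable {σ R : Type*} [CommSemiring R]

theorem monomial_one_eq_prod_X_pow_of_support_subset {f : σ →₀ ℕ} {T : Finset σ}
    (hf : f.support ⊆ T) : monomial f (1 : R) = ∏ i ∈ T, X i ^ f i := by
  rw [← prod_X_pow_eq_monomial]
  exact Finset.prod_subset hf fun _ _ hi => by rw [Finsupp.notMem_support_iff.mp hi, pow_zero]

theorem span_X_image_pow_le (T : Set σ) (m : ℕ) :
    Ideal.span (X '' T : Set (MvPolynomial σ R)) ^ m ≤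
      Ideal.span ((fun f => monomial f 1) '' {f | ↑f.support ⊆ T ∧ f.degree = m}) := by
  induction m with
  | zero =>
    rw [pow_zero, Ideal.one_eq_top, top_le_iff, Ideal.eq_top_iff_one]
    exact Ideal.subset_span ⟨0, ⟨by simp, map_zero _⟩, one_def.symm⟩
  | succ m ih =>
    rw [pow_succ]
    refine (Ideal.mul_mono_left ih).trans ?_
    rw [Ideal.span_mul_span', Ideal.span_le]
    rintro _ ⟨_, ⟨f, ⟨hfT, hfm⟩, rfl⟩, _, ⟨i, hi, rfl⟩, rfl⟩
    refine Ideal.subset_span ⟨f + Finsupp.single i 1, ⟨?_, ?_⟩, ?_⟩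
    · classical
      refine (Finset.coe_subset.mpr Finsupp.support_add).trans ?_
      rw [Finset.coe_union]
      exact Set.union_subset hfT
        ((Finset.coe_subset.mpr Finsupp.support_single_subset).trans (by simpa using hi))
    · rw [map_add, hfm, Finsupp.degree_single]
    · change monomial _ (1 : R) = monomial f 1 * monomial (Finsupp.single i 1) 1
      rw [monomial_mul, one_mul]

end MvPolynomial

theorem stmt7_general {K : Type*} [Field K] {n : ℕ}
    (T : Finset (Fin n)) (h r : ℕ) (hT : T.card ≤ h) :
    (Ideal.span ((fun i => (MvPolynomial.X i : MvPolynomial (Fin n) K)) '' (T : Set (Fin n)))) ^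
        (r * h - h) ≤
      Ideal.span ((fun i => (MvPolynomial.X i : MvPolynomial (Fin n) K) ^ r) '' (T : Set (Fin n))) +
        Ideal.span {(∏ i ∈ T, (MvPolynomial.X i : MvPolynomial (Fin n) K)) ^ (r - 1)} := by
  refine (span_X_image_pow_le _ _).trans (Ideal.span_le.mpr ?_)
  rintro _ ⟨f, ⟨hfT, hfdeg⟩, rfl⟩
  rw [Finset.coe_subset] at hfT
  have hsum : T.card * (r - 1) ≤ ∑ i ∈ T, f i := by
    rw [← Finsupp.degree_eq_sum_of_support_subset hfT, hfdeg, ← Nat.sub_one_mul]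
    exact (Nat.mul_le_mul_right _ hT).trans_eq (mul_comm _ _)
  simp only [SetLike.mem_coe, monomial_one_eq_prod_X_pow_of_support_subset hfT]
  rcases T.exists_lt_or_forall_eq_of_card_mul_le_sum f hsum with ⟨i, hi, hlt⟩ | heq
  · refine Ideal.mem_sup_left (Ideal.mem_of_dvd _ ?_ (Ideal.subset_span ⟨i, hi, rfl⟩))
    exact (pow_dvd_pow _ (by omega)).trans (Finset.dvd_prod_of_mem _ hi)
  · refine Ideal.mem_sup_right ?_
    rw [Finset.prod_congr rfl fun i hi => congrArg (X i ^ ·) (heq i hi), Finset.prod_pow]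
    exact Ideal.mem_span_singleton_self _

/-- If `Q` is a monomial prime generated by at most `h` variables, `r ≥ 2`, and `π(Q)`
the product of those variables, then `Q^{rh-h} ⊆ Q^{[r]} + (π(Q)^{r-1})`. -/
theorem stmt7 {K : Type*} [Field K] {n : ℕ}
    (T : Finset (Fin n)) (h r : ℕ) (hT : T.card ≤ h) (hr : 2 ≤ r) :
    (Ideal.span ((fun i => (MvPolynomial.X i : MvPolynomial (Fin n) K)) '' (T : Set (Fin n)))) ^
        (r * h - h) ≤
      Ideal.span ((fun i => (MvPolynomial.X i : MvPolynomial (Fin n) K) ^ r) '' (T : Set (Fin n))) +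
        Ideal.span {(∏ i ∈ T, (MvPolynomial.X i : MvPolynomial (Fin n) K)) ^ (r - 1)} :=
  stmt7_general T h r hT
end

section
/- Let I be a squarefree monomial ideal in K[x_1,...,x_n] (n ≥ 2) with big height h ≥ 2 (i.e., every associated prime of I is generated by at most h variables, and some associated prime has exactly h generators). Then for all integers r ≥ n, the symbolic power I^{(rh - h)} is contained in I^r, where I^{(s)} = ⋂_{P ∈ Ass(I)} P^s is the intersection of the s-th powers of the minimal primes of I. -/
/-!
A polynomial in `⋂ Pᵢ^s`, where `Pᵢ` is generated by the variables in `Tᵢ`, has only monomials of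
`Tᵢ`-degree at least `s`, and a monomial whose support meets every `Tᵢ` lies in `⋂ Pᵢ`. So it
suffices to find, below every exponent `m` of `Tᵢ`-degree `≥ (r - 1) h` for all `i`, a sum of `r`
exponents whose supports meet every `Tᵢ`. Label the variables injectively by `0, …, r - 1`
(possible as `n ≤ r`) and let the `k`-th one consist of the variables with `m_j ≥ r` together with
those with `m_j = r - 1` other than the one labelled `k`; each variable is then used at most `m_j`
times. If the `k`-th one missed `Tᵢ`, all exponents on `Tᵢ` would be `≤ r - 1`, all but one
`≤ r - 2`, so `(r - 1) h ≤ |Tᵢ| (r - 2) + 1`, which is impossible for `|Tᵢ| ≤ h` and `h ≥ 2`.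
-/

open MvPolynomial Finset

namespace MvPolynomial

variable {σ R : Type*} [CommSemiring R]

theorem mem_of_forall_monomial_one_mem {I : Ideal (MvPolynomial σ R)} {f : MvPolynomial σ R}
    (h : ∀ m ∈ f.support, monomial m (1 : R) ∈ I) : f ∈ I := by
  rw [f.as_sum]
  refine I.sum_mem fun m hm => ?_
  simpa [C_mul_monomial] using I.mul_mem_left (C (f.coeff m)) (h m hm)

theorem le_sum_of_mem_pow_span_X_image {T : Finset σ} {s : ℕ} {f : MvPolynomial σ R}
    (hf : f ∈ Ideal.span (X '' (T : Set σ)) ^ s) : ∀ m ∈ f.support, s ≤ ∑ j ∈ T, m j := by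
  classical
  induction s generalizing f with
  | zero => simp
  | succ s ih =>
    rw [pow_succ] at hf
    refine Submodule.mul_induction_on hf (fun a ha b hb m hm => ?_) (fun a b ha hb m hm => ?_)
    · obtain ⟨u, hu, v, hv, rfl⟩ := Finset.mem_add.mp (support_mul a b hm)
      obtain ⟨j, hj, hvj⟩ := mem_ideal_span_X_image.mp hb v hv
      have hv1 : 1 ≤ ∑ j ∈ T, v j :=
        (Nat.one_le_iff_ne_zero.2 hvj).trans (single_le_sum (fun _ _ => Nat.zero_le _) hj)
      simpa [sum_add_distrib] using add_le_add (ih ha u hu) hv1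
    · rcases Finset.mem_union.mp (support_add hm) with h | h
      exacts [ha m h, hb m h]

theorem monomial_one_mem_span_X_image {T : Set σ} {c : σ →₀ ℕ} (hc : ∃ j ∈ T, c j ≠ 0) :
    monomial c (1 : R) ∈ Ideal.span (X '' T) :=
  mem_ideal_span_X_image.2 fun _ hm => mem_singleton.1 (support_monomial_subset hm) ▸ hc

theorem monomial_one_mem_pow_of_sum_le {ι : Type*} {I : Ideal (MvPolynomial σ R)} (s : Finset ι)
    {c : ι → σ →₀ ℕ} (hc : ∀ k ∈ s, monomial (c k) (1 : R) ∈ I) {m : σ →₀ ℕ}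
    (hm : ∑ k ∈ s, c k ≤ m) : monomial m (1 : R) ∈ I ^ #s := by
  refine (I ^ #s).mem_of_dvd (monomial_dvd_monomial.2 ⟨Or.inr hm, one_dvd _⟩) ?_
  rw [monomial_sum_one, ← prod_const]
  exact Ideal.prod_mem_prod hc

end MvPolynomial

section CoverExponent

variable {σ : Type*} [Finite σ] {r : ℕ}

open Classical in
noncomputable def coverExponent (e : σ ↪ Fin r) (m : σ →₀ ℕ) (k : Fin r) : σ →₀ ℕ :=
  Finsupp.equivFunOnFinite.symm fun j => if r ≤ m j ∨ (m j = r - 1 ∧ e j ≠ k) then 1 else 0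

open Classical in
theorem coverExponent_apply (e : σ ↪ Fin r) (m : σ →₀ ℕ) (k : Fin r) (j : σ) :
    coverExponent e m k j = if r ≤ m j ∨ (m j = r - 1 ∧ e j ≠ k) then 1 else 0 := by
  simp [coverExponent]

theorem sum_coverExponent_le (e : σ ↪ Fin r) (m : σ →₀ ℕ) : ∑ k, coverExponent e m k ≤ m := by
  classical
  intro j
  simp only [Finsupp.coe_finsetSum, Finset.sum_apply, coverExponent_apply]
  rw [← card_filter]
  by_cases hjr : r ≤ m j
  · exact (card_filter_le _ _).trans (by simpa using hjr)
  by_cases hj : m j = r - 1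
  · calc #{k | r ≤ m j ∨ (m j = r - 1 ∧ e j ≠ k)} ≤ #(univ.erase (e j)) :=
          card_le_card fun k hk => mem_erase.2 ⟨fun h => by simp [h] at hk; omega, mem_univ k⟩
      _ = m j := by simp [hj]
  · simp [hjr, hj]

theorem exists_coverExponent_ne_zero {T : Finset σ} {h : ℕ} (hh : 2 ≤ h) (hT : #T ≤ h)
    (hr : 2 ≤ r) (e : σ ↪ Fin r) {m : σ →₀ ℕ} (hm : (r - 1) * h ≤ ∑ j ∈ T, m j) (k : Fin r) :
    ∃ j ∈ T, coverExponent e m k j ≠ 0 := by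
  classical
  by_contra! hmiss
  have hbound : ∀ j ∈ T, m j + 1 ≤ (r - 1) + if e j = k then 1 else 0 := fun j hj => by
    have := hmiss j hj
    simp only [coverExponent_apply, ite_eq_right_iff, one_ne_zero, imp_false] at this
    split_ifs <;> omega
  have hfiber : #{j ∈ T | e j = k} ≤ 1 :=
    card_le_one.2 fun a ha b hb => e.injective ((mem_filter.1 ha).2.trans (mem_filter.1 hb).2.symm)
  have hsum := sum_le_sum hbound
  rw [sum_add_distrib, sum_add_distrib, sum_const, sum_const, ← card_filter] at hsum
  simp only [smul_eq_mul, mul_one] at hsum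
  generalize #T = t at *
  generalize ∑ j ∈ T, m j = M at *
  obtain ⟨s, hs⟩ : ∃ s, r - 1 = s + 1 := ⟨r - 2, by omega⟩
  rw [hs] at hsum hm
  have := Nat.mul_le_mul_right (s + 1) hT
  rcases Nat.lt_or_ge t 2 with ht | ht
  · interval_cases t <;> nlinarith
  · nlinarith

end CoverExponent

theorem stmt8_general {K : Type*} [Field K] {n : ℕ} (hn : 2 ≤ n)
    (h : ℕ) (hh : 2 ≤ h) (p : ℕ)
    (T : Fin p → Finset (Fin n))
    (hT : ∀ i, (T i).card ≤ h)
    (r : ℕ) (hr : n ≤ r) :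
    (⨅ i : Fin p,
        (Ideal.span ((fun j => (MvPolynomial.X j : MvPolynomial (Fin n) K)) ''
          (T i : Set (Fin n)))) ^ (r * h - h)) ≤
      (⨅ i : Fin p,
        Ideal.span ((fun j => (MvPolynomial.X j : MvPolynomial (Fin n) K)) ''
          (T i : Set (Fin n)))) ^ r := by
  intro f hf
  refine mem_of_forall_monomial_one_mem fun m hm => ?_
  have hdeg (i : Fin p) : (r - 1) * h ≤ ∑ j ∈ T i, m j := by
    rw [Nat.sub_one_mul]
    exact le_sum_of_mem_pow_span_X_image (Ideal.mem_iInf.1 hf i) m hm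
  let e := Fin.castLEEmb hr
  have hcover (k : Fin r) : monomial (coverExponent e m k) (1 : K) ∈ ⨅ i : Fin p,
      Ideal.span ((fun j => (X j : MvPolynomial (Fin n) K)) '' (T i : Set (Fin n))) :=
    Ideal.mem_iInf.2 fun i => monomial_one_mem_span_X_image
      (exists_coverExponent_ne_zero hh (hT i) (hn.trans hr) e (hdeg i) k)
  simpa using monomial_one_mem_pow_of_sum_le univ (fun k _ => hcover k) (sum_coverExponent_le e m)

/-- If `I = ⋂ Qᵢ` is a squarefree monomial ideal in `n ≥ 2` variables with big height
`h ≥ 2` (each monomial prime `Qᵢ` generated by at most `h` variables, some by exactly `h`),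
then `I^{(rh-h)} = ⋂ Qᵢ^{rh-h} ⊆ I^r` for all `r ≥ n`. -/
theorem stmt8 {K : Type*} [Field K] {n : ℕ} (hn : 2 ≤ n)
    (h : ℕ) (hh : 2 ≤ h) (p : ℕ)
    (T : Fin p → Finset (Fin n))
    (hT : ∀ i, (T i).card ≤ h) (hT' : ∃ i, (T i).card = h)
    (r : ℕ) (hr : n ≤ r) :
    (⨅ i : Fin p,
        (Ideal.span ((fun j => (MvPolynomial.X j : MvPolynomial (Fin n) K)) ''
          (T i : Set (Fin n)))) ^ (r * h - h)) ≤
      (⨅ i : Fin p,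
        Ideal.span ((fun j => (MvPolynomial.X j : MvPolynomial (Fin n) K)) ''
          (T i : Set (Fin n)))) ^ r :=
  stmt8_general hn h hh p T hT r hr
end

section
/- Suppose I is an ideal of a Noetherian ring R, b is a positive integer such that the integral closure of I^{r+b} is contained in I^r for all r ≥ 1, and ρ̂ is a real number such that whenever I^{(s)} ⊄ closure(I^m) for positive integers s, m, then s/m < ρ̂. Then, whenever I^{(s)} ⊄ I^r for positive integers s, r, it follows that s/r < (1 + b/r)·ρ̂. -/
/-- The set of elements integral over an ideal `I`. -/
def intClSet {R : Type*} [CommRing R] (I : Ideal R) : Set R :=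
  {f | ∃ k : ℕ, 0 < k ∧ ∃ c : ℕ → R, (∀ i < k, c i ∈ I ^ (i + 1)) ∧
    f ^ k + ∑ i ∈ Finset.range k, c i * f ^ (k - 1 - i) = 0}

/-- The integral closure of an ideal `I` (as an ideal: the span of the set of elements
integral over `I`; this set is in fact already an ideal). -/
def intCl {R : Type*} [CommRing R] (I : Ideal R) : Ideal R :=
  Ideal.span (intClSet I)

/-- The `s`-th symbolic power `I^{(s)} = ⋂_{P ∈ Ass(R/I)} (I^s R_P ∩ R)`. -/
noncomputable def symbPow {R : Type*} [CommRing R] (I : Ideal R) (s : ℕ) : Ideal R :=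
  ⨅ P : {P : Ideal R // IsAssociatedPrime P (R ⧸ I)},
    haveI : P.1.IsPrime := P.2.1
    Ideal.comap (algebraMap R (Localization.AtPrime P.1))
      (Ideal.map (algebraMap R (Localization.AtPrime P.1)) (I ^ s))

/-- If `closure(I^{r+b}) ⊆ I^r` for all `r ≥ 1` and `I^{(s)} ⊄ closure(I^m)` implies
`s/m < ρ̂`, then `I^{(s)} ⊄ I^r` implies `s/r < (1 + b/r)·ρ̂`. -/
theorem stmt9 {R : Type*} [CommRing R] [IsNoetherianRing R] (I : Ideal R)
    (b : ℕ) (hb : 0 < b)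
    (hcl : ∀ r : ℕ, 1 ≤ r → intCl (I ^ (r + b)) ≤ I ^ r)
    (ρhat : ℝ)
    (hρ : ∀ s m : ℕ, 0 < s → 0 < m → ¬ (symbPow I s ≤ intCl (I ^ m)) → (s : ℝ) / m < ρhat)
    (s r : ℕ) (hs : 0 < s) (hr : 0 < r) (hnc : ¬ (symbPow I s ≤ I ^ r)) :
    (s : ℝ) / r < (1 + (b : ℝ) / r) * ρhat := by
  have h1 : ¬ (symbPow I s ≤ intCl (I ^ (r + b))) := fun h =>
    hnc (h.trans (hcl r hr))
  have h2 := hρ s (r + b) hs (by omega) h1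
  have hrpos : (0 : ℝ) < r := by exact_mod_cast hr
  have hrb : (0 : ℝ) < r + b := by positivity
  have key : (1 + (b : ℝ) / r) * ρhat = ((r + b : ℝ) / r) * ρhat := by
    field_simp
  rw [key]
  have : (s : ℝ) / r = ((s : ℝ) / (r + b)) * ((r + b : ℝ) / r) := by
    field_simp
  rw [this]
  calc ((s : ℝ) / (r + b)) * ((r + b : ℝ) / r)
      < ρhat * ((r + b : ℝ) / r) := by
        apply mul_lt_mul_of_pos_right _ (by positivity)
        exact_mod_cast h2
    _ = ((r + b : ℝ) / r) * ρhat := mul_comm _ _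
end

section
/- Let R be a Noetherian ring and I an ideal. Suppose the asymptotic resurgence ρ̂(I) := sup{s/r : I^{(st)} ⊄ I^{rt} for all t ≫ 0} is strictly less than the resurgence ρ(I) := sup{s/r : I^{(s)} ⊄ I^r}, and suppose there is an integer b ≥ 1 with closure(I^{r+b}) ⊆ I^r for all r ≥ 1, and the implication: for all positive integers s, m, if I^{(s)} ⊄ closure(I^m) then s/m < ρ̂(I). Then the supremum defining ρ(I) is attained: there exist positive integers s, r with I^{(s)} ⊄ I^r and ρ(I) = s/r. In particular ρ(I) is rational. -/
open Set

theorem csSup_mem_of_finite_inter_Ioi {α : Type*} [ConditionallyCompleteLinearOrder α]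
    {S : Set α} {c : α} (hne : S.Nonempty) (hc : c < sSup S) (hfin : (S ∩ Ioi c).Finite) :
    sSup S ∈ S := by
  obtain ⟨y, hyS, hcy⟩ := exists_lt_of_lt_csSup hne hc
  have hmem : sSup (S ∩ Ioi c) ∈ S ∩ Ioi c := Nonempty.csSup_mem ⟨y, hyS, hcy⟩ hfin
  have hgreatest : IsGreatest S (sSup (S ∩ Ioi c)) := by
    refine ⟨hmem.1, fun x hx => ?_⟩
    rcases le_or_gt x c with hxc | hxc
    · exact hxc.trans (hcy.le.trans (le_csSup hfin.bddAbove ⟨hyS, hcy⟩))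
    · exact le_csSup hfin.bddAbove ⟨hx, hxc⟩
  exact hgreatest.csSup_eq ▸ hmem.1

theorem finite_setOf_mul_lt_lt_mul_add {a c d : ℝ} (hac : a < c) :
    {p : ℕ × ℕ | c * p.2 < p.1 ∧ (p.1 : ℝ) < a * p.2 + d}.Finite := by
  obtain ⟨N, hN⟩ := exists_nat_gt (max (d / (c - a)) (|a| * (d / (c - a)) + d))
  refine ((finite_lt_nat N).prod (finite_lt_nat N)).subset ?_
  rintro ⟨s, r⟩ ⟨hcs, hsa⟩
  have hr : (r : ℝ) < d / (c - a) := by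
    rw [lt_div_iff₀ (sub_pos.2 hac)]
    linarith
  have hs : (s : ℝ) < |a| * (d / (c - a)) + d :=
    calc (s : ℝ) < a * r + d := hsa
      _ ≤ |a| * r + d := by gcongr; exact le_abs_self a
      _ ≤ |a| * (d / (c - a)) + d := by gcongr
  have hmax := max_lt_iff.1 hN
  exact ⟨by exact_mod_cast hs.trans hmax.2, by exact_mod_cast hr.trans hmax.1⟩

theorem stmt11_general {R : Type*} [CommRing R] (I : Ideal R)
    (ρ ρhat : ℝ)
    (hρ : ρ = sSup {x : ℝ | ∃ s r : ℕ, 0 < s ∧ 0 < r ∧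
      ¬ (symbPow I s ≤ I ^ r) ∧ x = (s : ℝ) / r})
    (hρhat : ρhat = sSup {x : ℝ | ∃ s r : ℕ, 0 < s ∧ 0 < r ∧
      (∀ᶠ t in Filter.atTop, ¬ (symbPow I (s * t) ≤ I ^ (r * t))) ∧ x = (s : ℝ) / r})
    (hlt : ρhat < ρ)
    (b : ℕ)
    (hcl : ∀ r : ℕ, 1 ≤ r → intCl (I ^ (r + b)) ≤ I ^ r)
    (himp : ∀ s m : ℕ, 0 < s → 0 < m →
      ¬ (symbPow I s ≤ intCl (I ^ m)) → (s : ℝ) / m < ρhat) :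
    (∃ s r : ℕ, 0 < s ∧ 0 < r ∧ ¬ (symbPow I s ≤ I ^ r) ∧ ρ = (s : ℝ) / r) ∧
      ∃ q : ℚ, ρ = (q : ℝ) := by
  set S := {x : ℝ | ∃ s r : ℕ, 0 < s ∧ 0 < r ∧ ¬ (symbPow I s ≤ I ^ r) ∧ x = (s : ℝ) / r}
  have hratio_bound : ∀ s r : ℕ, 0 < s → 0 < r → ¬ (symbPow I s ≤ I ^ r) →
      (s : ℝ) < ρhat * r + ρhat * b := by
    intro s r hs hr hnc
    have h := himp s (r + b) hs (by omega) fun h => hnc (h.trans (hcl r hr))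
    rw [div_lt_iff₀ (by positivity)] at h
    push_cast at h
    linarith
  have hρhat_nonneg : 0 ≤ ρhat :=
    hρhat ▸ Real.sSup_nonneg (by rintro _ ⟨s, r, -, -, -, rfl⟩; positivity)
  have hne : S.Nonempty := by
    by_contra h
    rw [not_nonempty_iff_eq_empty.1 h, Real.sSup_empty] at hρ
    linarith
  have hfin : (S ∩ Ioi ((ρhat + ρ) / 2)).Finite := by
    refine ((finite_setOf_mul_lt_lt_mul_add (a := ρhat) (c := (ρhat + ρ) / 2) (d := ρhat * b)
      (by linarith)).image fun p => (p.1 : ℝ) / p.2).subset ?_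
    rintro _ ⟨⟨s, r, hs, hr, hnc, rfl⟩, hc⟩
    exact ⟨(s, r), ⟨(lt_div_iff₀ (by positivity)).1 hc, hratio_bound s r hs hr hnc⟩, rfl⟩
  have hmem : ρ ∈ S := hρ ▸ csSup_mem_of_finite_inter_Ioi hne (by linarith) hfin
  obtain ⟨s, r, hs, hr, hnc, hsr⟩ := hmem
  exact ⟨⟨s, r, hs, hr, hnc, hsr⟩, (s : ℚ) / r, by rw [hsr]; push_cast; rfl⟩

/-- If the asymptotic resurgence is strictly smaller than the resurgence, and
`closure(I^{r+b}) ⊆ I^r` for all `r ≥ 1`, and non-containment in integral closures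
bounds ratios by the asymptotic resurgence, then the supremum defining the resurgence
is attained; in particular the resurgence is rational. -/
theorem stmt11 {R : Type*} [CommRing R] [IsNoetherianRing R] (I : Ideal R)
    (ρ ρhat : ℝ)
    (hρ : ρ = sSup {x : ℝ | ∃ s r : ℕ, 0 < s ∧ 0 < r ∧
      ¬ (symbPow I s ≤ I ^ r) ∧ x = (s : ℝ) / r})
    (hρhat : ρhat = sSup {x : ℝ | ∃ s r : ℕ, 0 < s ∧ 0 < r ∧
      (∀ᶠ t in Filter.atTop, ¬ (symbPow I (s * t) ≤ I ^ (r * t))) ∧ x = (s : ℝ) / r})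
    (hlt : ρhat < ρ)
    (b : ℕ) (hb : 1 ≤ b)
    (hcl : ∀ r : ℕ, 1 ≤ r → intCl (I ^ (r + b)) ≤ I ^ r)
    (himp : ∀ s m : ℕ, 0 < s → 0 < m →
      ¬ (symbPow I s ≤ intCl (I ^ m)) → (s : ℝ) / m < ρhat) :
    (∃ s r : ℕ, 0 < s ∧ 0 < r ∧ ¬ (symbPow I s ≤ I ^ r) ∧ ρ = (s : ℝ) / r) ∧
      ∃ q : ℚ, ρ = (q : ℝ) :=
  stmt11_general I ρ ρhat hρ hρhat hlt b hcl himp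
end

section
/- Let R be a ring, I an ideal, and ν a function from nonzero ideals of R to ℕ satisfying ν(JK) = ν(J) + ν(K) and ν(J+K) = min{ν(J), ν(K)} for all nonzero ideals J, K. Suppose the symbolic Rees algebra of I is generated in degrees at most n, so that for every s ≥ 1, I^{(s)} = Σ_{y_1 + 2y_2 + ... + n y_n = s} I^{y_1}(I^{(2)})^{y_2}⋯(I^{(n)})^{y_n} over non-negative integers y_i. Then the limit lim_{s→∞} ν(I^{(s)})/s exists and equals min_{1 ≤ m ≤ n} ν(I^{(m)})/m. -/
/-!
Because the symbolic Rees algebra is generated in degrees `≤ n`, the symbolic powers satisfy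
`I^{(s)} I^{(t)} ⊆ I^{(s+t)}`, so `s ↦ ν(I^{(s)})` is subadditive and Fekete's lemma gives the
limit as the infimum of `ν(I^{(s)})/s` over `s ≥ 1`. Writing `I^{(s)}` as a finite sum of products
`∏ (I^{(m)})^{y_m}` with `∑ m y_m = s`, the value `ν(I^{(s)})` is `∑ y_m ν(I^{(m)})` for one of the
summands, which is at least `s · min_{m ≤ n} ν(I^{(m)})/m`; so the infimum is attained at some
`m ≤ n`.
-/

open Filter Topology

theorem Subadditive.tendsto_of_isLeast {u : ℕ → ℝ} {c : ℝ} (hu : Subadditive u)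
    (hc : IsLeast ((fun s : ℕ => u s / s) '' Set.Ici 1) c) :
    Tendsto (fun s : ℕ => u s / s) atTop (𝓝 c) := by
  have hbdd : BddBelow (Set.range fun s : ℕ => u s / s) := by
    refine ⟨min c 0, ?_⟩
    rintro _ ⟨s, rfl⟩
    rcases Nat.eq_zero_or_pos s with rfl | hs
    · simp
    · exact min_le_of_left_le (hc.2 ⟨s, hs, rfl⟩)
  have h := hu.tendsto_lim hbdd
  rwa [Subadditive.lim, hc.csInf_eq] at h

section IdealValuation

variable {R : Type*} [CommRing R] (ν : Ideal R → ℕ)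
    (hmul : ∀ J K : Ideal R, J ≠ ⊥ → K ≠ ⊥ → ν (J * K) = ν J + ν K)
    (hadd : ∀ J K : Ideal R, J ≠ ⊥ → K ≠ ⊥ → ν (J + K) = min (ν J) (ν K))

include hmul in
lemma nu_top [Nontrivial R] : ν ⊤ = 0 := by
  have h := hmul ⊤ ⊤ top_ne_bot top_ne_bot
  rw [Ideal.mul_top] at h
  omega

include hmul in
lemma nu_pow [Nontrivial R] {J : Ideal R} {k : ℕ} (h : J ^ k ≠ ⊥) : ν (J ^ k) = k * ν J := by
  induction k with
  | zero => simpa using nu_top ν hmul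
  | succ k ih =>
    rw [pow_succ] at h ⊢
    have hk : J ^ k ≠ ⊥ := fun hk => h (by rw [hk, Ideal.bot_mul])
    have hJ : J ≠ ⊥ := fun hJ => h (by rw [hJ, Ideal.mul_bot])
    rw [hmul _ _ hk hJ, ih hk, Nat.succ_mul]

include hmul in
lemma nu_prod [Nontrivial R] {ι : Type*} (t : Finset ι) (B : ι → Ideal R)
    (h : ∏ i ∈ t, B i ≠ ⊥) : ν (∏ i ∈ t, B i) = ∑ i ∈ t, ν (B i) := by
  classical
  induction t using Finset.induction_on with
  | empty => simpa using nu_top ν hmul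
  | insert a t ha ih =>
    rw [Finset.prod_insert ha] at h ⊢
    have hBa : B a ≠ ⊥ := fun hBa => h (by rw [hBa, Ideal.bot_mul])
    have ht : ∏ i ∈ t, B i ≠ ⊥ := fun ht => h (by rw [ht, Ideal.mul_bot])
    rw [hmul _ _ hBa ht, ih ht, Finset.sum_insert ha]

include hmul in
lemma nu_prod_pow [Nontrivial R] {ι : Type*} (t : Finset ι) (B : ι → Ideal R) (k : ι → ℕ)
    (h : ∏ i ∈ t, B i ^ k i ≠ ⊥) : ν (∏ i ∈ t, B i ^ k i) = ∑ i ∈ t, k i * ν (B i) := by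
  rw [nu_prod ν hmul t _ h]
  refine Finset.sum_congr rfl fun i hi => nu_pow ν hmul fun hi' => h ?_
  rw [← Ideal.zero_eq_bot] at hi' ⊢
  exact Finset.prod_eq_zero hi hi'

include hadd in
lemma nu_antitone {J K : Ideal R} (hJK : J ≤ K) (hJ : J ≠ ⊥) : ν K ≤ ν J := by
  have hK : K ≠ ⊥ := ne_bot_of_le_ne_bot hJ hJK
  have h := hadd J K hJ hK
  rw [Submodule.add_eq_sup, sup_eq_right.mpr hJK] at h
  omega

include hmul hadd in
/-- Without a domain hypothesis `J * K` may vanish; then `hmul` pins `ν ⊥ = ν J + ν K`, and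
comparing `J * (K * C)` with `K * C` bounds `ν C`. -/
lemma nu_le_add_of_mul_le {J K C : Ideal R} (hJ : J ≠ ⊥) (hK : K ≠ ⊥) (hC : C ≠ ⊥)
    (hJKC : J * K ≤ C) : ν C ≤ ν J + ν K := by
  have hJK := hmul J K hJ hK
  by_cases hJK0 : J * K = ⊥
  · rw [hJK0] at hJK
    by_cases hKC0 : K * C = ⊥
    · have hKC := hmul K C hK hC
      rw [hKC0] at hKC
      omega
    · have hJKC' := hmul J (K * C) hJ hKC0
      rw [← mul_assoc, hJK0, Ideal.bot_mul, hmul K C hK hC] at hJKC'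
      omega
  · rw [← hJK]
    exact nu_antitone ν hadd hJKC hJK0

include hadd in
lemma exists_nu_finset_sup_eq {ι : Type*} (t : Finset ι) (B : ι → Ideal R) (h : t.sup B ≠ ⊥) :
    ∃ i ∈ t, B i ≠ ⊥ ∧ ν (t.sup B) = ν (B i) := by
  classical
  induction t using Finset.induction_on with
  | empty => simp at h
  | insert a t ha ih =>
    rw [Finset.sup_insert] at h ⊢
    by_cases hBa : B a = ⊥
    · rw [hBa, bot_sup_eq] at h ⊢
      obtain ⟨i, hi, hBi, hν⟩ := ih h
      exact ⟨i, Finset.mem_insert_of_mem hi, hBi, hν⟩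
    by_cases ht : t.sup B = ⊥
    · rw [ht, sup_bot_eq]
      exact ⟨a, Finset.mem_insert_self a t, hBa, rfl⟩
    rw [← Submodule.add_eq_sup, hadd _ _ hBa ht]
    rcases min_choice (ν (B a)) (ν (t.sup B)) with hmin | hmin <;> rw [hmin]
    · exact ⟨a, Finset.mem_insert_self a t, hBa, rfl⟩
    · obtain ⟨i, hi, hBi, hν⟩ := ih ht
      exact ⟨i, Finset.mem_insert_of_mem hi, hBi, hν⟩

include hadd in
lemma exists_nu_iSup_eq {ι : Type*} [Finite ι] (B : ι → Ideal R) (h : ⨆ i, B i ≠ ⊥) :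
    ∃ i, B i ≠ ⊥ ∧ ν (⨆ i, B i) = ν (B i) := by
  have := Fintype.ofFinite ι
  rw [← Finset.sup_univ_eq_iSup] at h ⊢
  obtain ⟨i, -, hi⟩ := exists_nu_finset_sup_eq ν hadd _ B h
  exact ⟨i, hi⟩

end IdealValuation

lemma finite_weighted_compositions (n s : ℕ) :
    Finite {y : Fin n → ℕ // ∑ i : Fin n, ((i : ℕ) + 1) * y i = s} := by
  have hsub : {y : Fin n → ℕ | ∑ i : Fin n, ((i : ℕ) + 1) * y i = s} ⊆
      Set.univ.pi fun _ => Set.Iic s := by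
    intro y hy i _
    rw [Set.mem_Iic, ← hy]
    calc y i ≤ ((i : ℕ) + 1) * y i := Nat.le_mul_of_pos_left _ i.succ_pos
      _ ≤ _ := Finset.single_le_sum (f := fun i : Fin n => ((i : ℕ) + 1) * y i)
          (fun _ _ => Nat.zero_le _) (Finset.mem_univ i)
  exact ((Set.Finite.pi fun _ => Set.finite_Iic s).subset hsub).to_subtype

section SymbolicPowers

variable {R : Type*} [CommRing R] (Isymb : ℕ → Ideal R) (n : ℕ)
    (hgen : ∀ s : ℕ, 1 ≤ s →
      Isymb s = ⨆ y : {y : Fin n → ℕ // ∑ i : Fin n, ((i : ℕ) + 1) * y i = s},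
        ∏ i : Fin n, (Isymb ((i : ℕ) + 1)) ^ (y.1 i))

include hgen in
lemma symb_mul_le {s t : ℕ} (hs : 1 ≤ s) (ht : 1 ≤ t) : Isymb s * Isymb t ≤ Isymb (s + t) := by
  rw [hgen s hs, hgen t ht, hgen (s + t) (by omega), Submodule.iSup_mul]
  refine iSup_le fun y => ?_
  rw [Submodule.mul_iSup]
  refine iSup_le fun z => ?_
  rw [← Finset.prod_mul_distrib]
  simp_rw [← pow_add]
  exact le_iSup_of_le ⟨y.1 + z.1, by simp only [Pi.add_apply, Nat.mul_add,
    Finset.sum_add_distrib, y.2, z.2]⟩ le_rfl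

variable (ν : Ideal R → ℕ)
    (hmul : ∀ J K : Ideal R, J ≠ ⊥ → K ≠ ⊥ → ν (J * K) = ν J + ν K)
    (hadd : ∀ J K : Ideal R, J ≠ ⊥ → K ≠ ⊥ → ν (J + K) = min (ν J) (ν K))

include hgen hmul hadd in
lemma subadditive_nu_symb (hne : ∀ m : ℕ, 1 ≤ m → Isymb m ≠ ⊥) :
    Subadditive fun s => (ν (Isymb s) : ℝ) := by
  intro s t
  rcases Nat.eq_zero_or_pos s with rfl | hs
  · simp
  rcases Nat.eq_zero_or_pos t with rfl | ht
  · simp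
  show (ν (Isymb (s + t)) : ℝ) ≤ ν (Isymb s) + ν (Isymb t)
  exact_mod_cast nu_le_add_of_mul_le ν hmul hadd (hne s hs) (hne t ht) (hne _ (by omega))
    (symb_mul_le Isymb n hgen hs ht)

include hgen hmul hadd in
lemma mul_le_nu_symb [Nontrivial R] {r : ℝ}
    (hr : ∀ m : ℕ, 1 ≤ m → m ≤ n → r * m ≤ ν (Isymb m))
    {s : ℕ} (hs : 1 ≤ s) (hs0 : Isymb s ≠ ⊥) : r * s ≤ ν (Isymb s) := by
  have := finite_weighted_compositions n s
  rw [hgen s hs] at hs0 ⊢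
  obtain ⟨y, hy0, hy⟩ := exists_nu_iSup_eq ν hadd _ hs0
  have hsum : (s : ℝ) = ∑ i : Fin n, (((i : ℕ) + 1) * y.1 i : ℝ) := by exact_mod_cast y.2.symm
  rw [hy, nu_prod_pow ν hmul _ _ _ hy0, hsum]
  push_cast
  rw [Finset.mul_sum]
  refine Finset.sum_le_sum fun i _ => ?_
  calc r * (((i : ℕ) + 1) * y.1 i) = r * ((i : ℕ) + 1 : ℕ) * y.1 i := by push_cast; ring
    _ ≤ ν (Isymb ((i : ℕ) + 1)) * y.1 i :=
      mul_le_mul_of_nonneg_right (hr _ (by omega) i.isLt) (Nat.cast_nonneg _)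
    _ = y.1 i * ν (Isymb ((i : ℕ) + 1)) := mul_comm _ _

end SymbolicPowers

/-- If the symbolic powers of `I` decompose according to a symbolic Rees algebra
generated in degrees at most `n`, and `ν` is multiplicative and min-additive on nonzero
ideals, then `lim ν(I^{(s)})/s` exists and equals `min_{1 ≤ m ≤ n} ν(I^{(m)})/m`. -/
theorem stmt12 {R : Type*} [CommRing R] [Nontrivial R]
    (Isymb : ℕ → Ideal R) (n : ℕ) (hn : 1 ≤ n)
    (hne : ∀ m : ℕ, 1 ≤ m → Isymb m ≠ ⊥)
    (ν : Ideal R → ℕ)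
    (hmul : ∀ J K : Ideal R, J ≠ ⊥ → K ≠ ⊥ → ν (J * K) = ν J + ν K)
    (hadd : ∀ J K : Ideal R, J ≠ ⊥ → K ≠ ⊥ → ν (J + K) = min (ν J) (ν K))
    (hgen : ∀ s : ℕ, 1 ≤ s →
      Isymb s = ⨆ y : {y : Fin n → ℕ // ∑ i : Fin n, ((i : ℕ) + 1) * y i = s},
        ∏ i : Fin n, (Isymb ((i : ℕ) + 1)) ^ (y.1 i)) :
    Filter.Tendsto (fun s : ℕ => (ν (Isymb s) : ℝ) / s) Filter.atTop
      (nhds ((Finset.Icc 1 n).inf'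
        (by exact Finset.nonempty_Icc.mpr hn)
        (fun m => (ν (Isymb m) : ℝ) / m))) := by
  refine (subadditive_nu_symb Isymb n hgen ν hmul hadd hne).tendsto_of_isLeast ⟨?_, ?_⟩
  · obtain ⟨m, hm, hmin⟩ := Finset.exists_mem_eq_inf' (Finset.nonempty_Icc.mpr hn)
      fun m => (ν (Isymb m) : ℝ) / m
    exact ⟨m, (Finset.mem_Icc.mp hm).1, hmin.symm⟩
  · rintro _ ⟨s, hs, rfl⟩
    rw [le_div_iff₀ (by exact_mod_cast hs)]
    refine mul_le_nu_symb Isymb n hgen ν hmul hadd (fun m hm1 hmn => ?_) hs (hne s hs)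
    rw [← le_div_iff₀ (by exact_mod_cast hm1)]
    exact Finset.inf'_le (fun m => (ν (Isymb m) : ℝ) / m) (Finset.mem_Icc.mpr ⟨hm1, hmn⟩)
end

section
/- Let I be a radical ideal in a regular ring R containing a field, with big height h, and suppose Johnson's containment holds: for all positive integers q and non-negative integers a_1,...,a_q with a = a_1 + ... + a_q, one has I^{(a + qh)} ⊆ ∏_{i=1}^q I^{(a_i + 1)}. If I^{(s+1)} ⊆ closure(I^r) for some positive integers r, s, then for every positive integer q, I^{(q(s+h))} ⊆ closure(I^{qr}). -/
/-! Johnson's containment with `a = q s` and all `aᵢ = s` gives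
`I^{(q(s+h))} ⊆ (I^{(s+1)})^q ⊆ closure(I^r)^q`, so it remains to see that integral closure of
ideals is submultiplicative. By the determinant trick, `f` is integral over `J` iff `f M ⊆ J M`
for some finitely generated ideal `M` containing a power of `f`; for an integral equation of
degree `k` with coefficients in a finitely generated `J₀ ⊆ J` one may take
`M = (J₀ + (f))^(k-1)`, and such witnesses multiply. -/

open Polynomial

section

variable {R : Type*} [CommRing R]

lemma mem_intClSet_of_mem {J : Ideal R} {f : R} (hf : f ∈ J) : f ∈ intClSet J :=
  ⟨1, one_pos, fun _ => -f, fun i hi => by simpa [Nat.lt_one_iff.mp hi] using hf, by simp⟩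

lemma mem_intClSet_of_monic {K : Ideal R} {p : R[X]} (hp : p.Monic)
    (hcoeff : ∀ i, p.coeff i ∈ K ^ (p.natDegree - i)) {f : R} (hf : p.eval f = 0) :
    f ∈ intClSet K := by
  set n := p.natDegree
  rcases Nat.eq_zero_or_pos n with hn | hn
  · have : Subsingleton R := subsingleton_of_zero_eq_one <| by
      simpa [eq_one_of_monic_natDegree_zero hp hn] using hf.symm
    exact mem_intClSet_of_mem (by simp [Subsingleton.elim f 0])
  refine ⟨n, hn, fun i => p.coeff (n - 1 - i), fun i hi => ?_, ?_⟩
  · simpa [show n - (n - 1 - i) = i + 1 by omega] using hcoeff (n - 1 - i)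
  · rw [eval_eq_sum_range, Finset.sum_range_succ, hp.coeff_natDegree, one_mul] at hf
    rw [← hf, add_comm, ← Finset.sum_range_reflect]
    refine congrArg (· + _) (Finset.sum_congr rfl fun j hj => ?_)
    have hj : j < n := Finset.mem_range.mp hj
    dsimp only
    rw [show n - 1 - (n - 1 - j) = j by omega]

/-- The determinant trick; `f ^ N ∈ M` replaces faithfulness of `M`. -/
lemma mem_intClSet_of_fg {K M : Ideal R} (hM : M.FG) {f : R}
    (hfM : Ideal.span {f} * M ≤ K * M) {N : ℕ} (hfN : f ^ N ∈ M) : f ∈ intClSet K := by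
  have : Module.Finite R M := Module.Finite.iff_fg.mpr hM
  have hrange : LinearMap.range (algebraMap R (Module.End R M) f) ≤ K • ⊤ := by
    rintro _ ⟨x, rfl⟩
    exact (Submodule.mem_smul_top_iff _ _ _).mpr
      (hfM (Ideal.mul_mem_mul (Ideal.mem_span_singleton_self f) x.2))
  obtain ⟨p, hp, -, hcoeff, hpf⟩ :=
    LinearMap.exists_monic_and_natDegree_eq_and_coeff_mem_pow_and_aeval_eq_zero R _ K hrange
  rw [aeval_algebraMap_apply_eq_algebraMap_eval] at hpf
  have hpfN : p.eval f * f ^ N = 0 := congrArg Subtype.val (LinearMap.congr_fun hpf ⟨f ^ N, hfN⟩)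
  refine mem_intClSet_of_monic (hp.mul (monic_X_pow N)) (fun i => ?_) (by simpa using hpfN)
  have hdeg : (p * X ^ N).natDegree ≤ p.natDegree + N :=
    natDegree_mul_le.trans (add_le_add le_rfl (natDegree_X_pow_le N))
  rw [coeff_mul_X_pow']
  split_ifs with hi
  · exact Ideal.pow_le_pow_right (by omega : _ ≤ p.natDegree - (i - N)) (hcoeff (i - N))
  · exact zero_mem _

lemma Ideal.exists_fg_le_and_mem_pow {J : Ideal R} {m : ℕ} {x : R} (hx : x ∈ J ^ m) :
    ∃ J₀ : Ideal R, J₀.FG ∧ J₀ ≤ J ∧ x ∈ J₀ ^ m := by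
  induction m generalizing x with
  | zero => exact ⟨⊥, Submodule.fg_bot, bot_le, by simp⟩
  | succ m ih =>
    rw [pow_succ] at hx
    refine Submodule.mul_induction_on hx (fun a ha b hb => ?_) ?_
    · obtain ⟨J₀, hfg, hle, ha₀⟩ := ih ha
      refine ⟨J₀ ⊔ Ideal.span {b}, Submodule.FG.sup hfg (Submodule.fg_span_singleton b),
        sup_le hle ((Ideal.span_singleton_le_iff_mem _).mpr hb), ?_⟩
      rw [pow_succ]
      exact Ideal.mul_mem_mul (Ideal.pow_right_mono le_sup_left _ ha₀)
        (Ideal.mem_sup_right (Ideal.mem_span_singleton_self b))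
    · rintro a b ⟨Ja, hfga, hlea, ha⟩ ⟨Jb, hfgb, hleb, hb⟩
      exact ⟨Ja ⊔ Jb, Submodule.FG.sup hfga hfgb, sup_le hlea hleb,
        add_mem (Ideal.pow_right_mono le_sup_left _ ha) (Ideal.pow_right_mono le_sup_right _ hb)⟩

lemma exists_fg_le_mem_intClSet {J : Ideal R} {f : R} (hf : f ∈ intClSet J) :
    ∃ J₀ : Ideal R, J₀.FG ∧ J₀ ≤ J ∧ f ∈ intClSet J₀ := by
  obtain ⟨k, hk, c, hc, heq⟩ := hf
  choose J' hfg hle hmem using fun i : Fin k => Ideal.exists_fg_le_and_mem_pow (hc i i.2)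
  exact ⟨⨆ i, J' i, Submodule.fg_iSup J' hfg, iSup_le hle, k, hk, c,
    fun i hi => Ideal.pow_right_mono (le_iSup J' ⟨i, hi⟩) _ (hmem ⟨i, hi⟩), heq⟩

lemma Ideal.span_singleton_mul_sup_span_singleton_pow_le (J : Ideal R) (f : R) (m : ℕ) :
    Ideal.span {f} * (J ⊔ Ideal.span {f}) ^ m ≤
      J * (J ⊔ Ideal.span {f}) ^ m ⊔ Ideal.span {f ^ (m + 1)} := by
  set T := J ⊔ Ideal.span {f}
  induction m with
  | zero => simp
  | succ m ih =>
    have hJ : J * Ideal.span {f ^ (m + 1)} ≤ J * T ^ (m + 1) := by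
      gcongr
      rw [← Ideal.span_singleton_pow]
      exact Ideal.pow_right_mono le_sup_right _
    calc Ideal.span {f} * T ^ (m + 1) = T * (Ideal.span {f} * T ^ m) := by ring
      _ ≤ T * (J * T ^ m ⊔ Ideal.span {f ^ (m + 1)}) := Ideal.mul_mono_right ih
      _ = J * T ^ (m + 1) ⊔ (J * Ideal.span {f ^ (m + 1)} ⊔ Ideal.span {f ^ (m + 2)}) := by
        rw [Ideal.mul_sup, mul_left_comm T J, ← pow_succ']
        congr 1
        rw [Ideal.sup_mul, Ideal.span_singleton_mul_span_singleton, ← pow_succ']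
      _ ≤ J * T ^ (m + 1) ⊔ Ideal.span {f ^ (m + 2)} := by
        rw [← sup_assoc, sup_of_le_left hJ]

lemma exists_fg_mul_le_of_mem_intClSet {J : Ideal R} {f : R} (hf : f ∈ intClSet J) :
    ∃ M : Ideal R, M.FG ∧ Ideal.span {f} * M ≤ J * M ∧ ∃ N, f ^ N ∈ M := by
  obtain ⟨J₀, hJ₀, hJ₀J, k, hk, c, hc, heq⟩ := exists_fg_le_mem_intClSet hf
  set T := J₀ ⊔ Ideal.span {f}
  have hfT : f ∈ T := Ideal.mem_sup_right (Ideal.mem_span_singleton_self f)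
  have hterm : ∀ i < k, J₀ ^ (i + 1) * T ^ (k - 1 - i) ≤ J₀ * T ^ (k - 1) := fun i hi =>
    calc J₀ ^ (i + 1) * T ^ (k - 1 - i) = J₀ * (J₀ ^ i * T ^ (k - 1 - i)) := by ring
      _ ≤ J₀ * (T ^ i * T ^ (k - 1 - i)) := by gcongr; exact le_sup_left
      _ = J₀ * T ^ (k - 1) := by rw [← pow_add, Nat.add_sub_of_le (by omega)]
  have hfk : f ^ k ∈ J₀ * T ^ (k - 1) := by
    rw [show f ^ k = -∑ i ∈ Finset.range k, c i * f ^ (k - 1 - i) by linear_combination heq]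
    refine neg_mem (Ideal.sum_mem _ fun i hi => ?_)
    have hi := Finset.mem_range.mp hi
    exact hterm i hi (Ideal.mul_mem_mul (hc i hi) (Ideal.pow_mem_pow hfT _))
  refine ⟨T ^ (k - 1), Submodule.FG.pow (Submodule.FG.sup hJ₀ (Submodule.fg_span_singleton f)) _,
    ?_, k - 1, Ideal.pow_mem_pow hfT _⟩
  calc Ideal.span {f} * T ^ (k - 1) ≤ J₀ * T ^ (k - 1) ⊔ Ideal.span {f ^ (k - 1 + 1)} :=
        Ideal.span_singleton_mul_sup_span_singleton_pow_le J₀ f (k - 1)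
    _ ≤ J₀ * T ^ (k - 1) := by
        rw [Nat.sub_add_cancel hk, sup_le_iff, Ideal.span_singleton_le_iff_mem]
        exact ⟨le_rfl, hfk⟩
    _ ≤ J * T ^ (k - 1) := Ideal.mul_mono_left hJ₀J

lemma mem_intClSet_iff_exists_fg {J : Ideal R} {f : R} :
    f ∈ intClSet J ↔ ∃ M : Ideal R, M.FG ∧ Ideal.span {f} * M ≤ J * M ∧ ∃ N, f ^ N ∈ M :=
  ⟨exists_fg_mul_le_of_mem_intClSet, fun ⟨_, hM, hfM, _, hfN⟩ => mem_intClSet_of_fg hM hfM hfN⟩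

lemma mul_mem_intClSet_mul {J K : Ideal R} {f g : R} (hf : f ∈ intClSet J)
    (hg : g ∈ intClSet K) : f * g ∈ intClSet (J * K) := by
  obtain ⟨M, hM, hfM, N, hfN⟩ := mem_intClSet_iff_exists_fg.mp hf
  obtain ⟨M', hM', hgM', N', hgN'⟩ := mem_intClSet_iff_exists_fg.mp hg
  refine mem_intClSet_iff_exists_fg.mpr ⟨M * M', Submodule.FG.mul hM hM', ?_, N + N', ?_⟩
  · calc Ideal.span {f * g} * (M * M') = (Ideal.span {f} * M) * (Ideal.span {g} * M') := by
          rw [← Ideal.span_singleton_mul_span_singleton]; ring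
      _ ≤ (J * M) * (K * M') := Ideal.mul_mono hfM hgM'
      _ = J * K * (M * M') := by ring
  · rw [mul_pow, pow_add f, pow_add g]
    exact Ideal.mul_mem_mul (M.mul_mem_right _ hfN) (M'.mul_mem_left _ hgN')

lemma le_intCl (J : Ideal R) : J ≤ intCl J :=
  fun _ hf => Ideal.subset_span (mem_intClSet_of_mem hf)

lemma intCl_mul_le (J K : Ideal R) : intCl J * intCl K ≤ intCl (J * K) := by
  rw [intCl, intCl, Ideal.span_mul_span', intCl, Ideal.span_le]
  rintro _ ⟨f, hf, g, hg, rfl⟩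
  exact Ideal.subset_span (mul_mem_intClSet_mul hf hg)

lemma intCl_pow_le (J : Ideal R) (q : ℕ) : intCl J ^ q ≤ intCl (J ^ q) := by
  induction q with
  | zero => simpa using le_intCl (⊤ : Ideal R)
  | succ q ih =>
    calc intCl J ^ (q + 1) = intCl J ^ q * intCl J := pow_succ _ _
      _ ≤ intCl (J ^ q) * intCl J := Ideal.mul_mono_left ih
      _ ≤ intCl (J ^ (q + 1)) := pow_succ J q ▸ intCl_mul_le _ _

end

theorem stmt15_general {R : Type*} [CommRing R] (I : Ideal R) (h : ℕ)
    (hJohnson : ∀ q : ℕ, 0 < q → ∀ a : Fin q → ℕ,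
      symbPow I ((∑ i, a i) + q * h) ≤ ∏ i : Fin q, symbPow I (a i + 1))
    (r s : ℕ)
    (hc : symbPow I (s + 1) ≤ intCl (I ^ r)) :
    ∀ q : ℕ, 0 < q → symbPow I (q * (s + h)) ≤ intCl (I ^ (q * r)) := by
  intro q hq
  have hJ := hJohnson q hq (fun _ => s)
  simp only [Finset.sum_const, Finset.prod_const, Finset.card_univ, Fintype.card_fin,
    smul_eq_mul] at hJ
  calc symbPow I (q * (s + h)) = symbPow I (q * s + q * h) := by rw [mul_add]
    _ ≤ symbPow I (s + 1) ^ q := hJ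
    _ ≤ intCl (I ^ r) ^ q := pow_le_pow_left' hc q
    _ ≤ intCl (I ^ (q * r)) := by rw [mul_comm, pow_mul]; exact intCl_pow_le _ q

/-- If Johnson's containment `I^{(a+qh)} ⊆ ∏ I^{(aᵢ+1)}` holds for a radical ideal `I`
of big height `h`, and `I^{(s+1)} ⊆ closure(I^r)`, then `I^{(q(s+h))} ⊆ closure(I^{qr})`
for every positive integer `q`. -/
theorem stmt15 {R : Type*} [CommRing R] (I : Ideal R) (hrad : I.IsRadical) (h : ℕ)
    (hJohnson : ∀ q : ℕ, 0 < q → ∀ a : Fin q → ℕ,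
      symbPow I ((∑ i, a i) + q * h) ≤ ∏ i : Fin q, symbPow I (a i + 1))
    (r s : ℕ) (hr : 0 < r) (hs : 0 < s)
    (hc : symbPow I (s + 1) ≤ intCl (I ^ r)) :
    ∀ q : ℕ, 0 < q → symbPow I (q * (s + h)) ≤ intCl (I ^ (q * r)) :=
  stmt15_general I h hJohnson r s hc
end
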